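/- Suppose: (1) f, g : ℝ → ℝ are globally Lipschitz with Lipschitz constant at most K₀, with |f(0)| ≤ K₀ and |g(0)| ≤ K₀, and f, g are differentiable with |f'| ≤ K₀, |g'| ≤ K₀ and with f', g' globally Lipschitz with constant at most K₀; (2) v̄ : [t₀,t₁]×𝕊 → ℝ is continuously differentiable in t and twice continuously differentiable in x, with |v̄| ≤ K₁, |∂_x v̄| ≤ K₁, |∂_x² v̄| ≤ K₂ h^{−p}, |∂_t v̄| ≤ K₂ h^{−p}, and |∂_x² v̄(t,x₁) − ∂_x² v̄(t,x₂)| ≤ K₃ h^{−p} d(x₁,x₂)^ρ for all t ∈ [t₀,t₁] and x₁, x₂ ∈ 𝕊; (3) there is a function z̄ : [t₀,t₁]×𝕊 → [0,1] such that ∂_t v̄ = D ∂_x² v̄ + z̄ f(v̄) − g(v̄) on [t₀,t₁]×𝕊; (4) Z : ℤ/nℤ → {0,1} and χ : ℤ/nℤ → ℝ are constant in time and satisfy D( χ^{(k+1)} − 2χ^{(k)} + χ^{(k−1)} ) = z̄(t,hk) − Z^{(k)} for all t ∈ [t₀,t₁] and all k ∈ ℤ/nℤ, together with max_k |χ^{(k)}|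 ≤ K₄ h^{2p−2} and max_k |χ^{(k+1)} − χ^{(k)}| ≤ K₄ h^{p−1}. Define the ansatz V̄^{(k)}(t) := v̄(t,hk) + h² χ^{(k)} f(v̄(t,hk)) and the residual res^{(k)}(t) := (d/dt) V̄^{(k)}(t) − [ D h^{−2}( V̄^{(k−1)}(t) − 2 V̄^{(k)}(t) + V̄^{(k+1)}(t) ) + Z^{(k)} f(V̄^{(k)}(t)) − g(V̄^{(k)}(t)) ]. Then there exists a constant C ∈ (0,∞), depending only on D, K₀, K₁, K₂, K₃, K₄ (and not on n, h, t₀, t₁), such that sup_{t∈[t₀,t₁]} max_{k∈ℤ/nℤ} |res^{(k)}(t)| ≤ C ( h^p ∨ h^{ρ−p} ). -/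

import Mathlib

/-- Geodesic distance on the circle `ℝ/Lℤ`. -/
noncomputable def circleDist (L x y : ℝ) : ℝ := ‖((x : AddCircle L) - (y : AddCircle L))‖

/-- The approximate ansatz `V̄^{(k)}(t) := v̄(t,hk) + h² χ^{(k)} f(v̄(t,hk))`, with `h = 1/n`. -/
noncomputable def ansatz (n : ℕ) (vb : ℝ → ℝ → ℝ) (χ : ZMod n → ℝ) (f : ℝ → ℝ)
    (k : ZMod n) (t : ℝ) : ℝ :=
  vb t ((n : ℝ)⁻¹ * (ZMod.val k)) +
    ((n : ℝ)⁻¹) ^ 2 * χ k * f (vb t ((n : ℝ)⁻¹ * (ZMod.val k)))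

/-- The residual `res^{(k)}(t) := (d/dt)V̄^{(k)}(t) −
[D h^{-2}(V̄^{(k−1)} − 2V̄^{(k)} + V̄^{(k+1)}) + Z^{(k)} f(V̄^{(k)}) − g(V̄^{(k)})]`,
the time derivative taken within `[t₀,t₁]`. -/
noncomputable def ansatzResidual (D : ℝ) (n : ℕ) (vb : ℝ → ℝ → ℝ) (χ : ZMod n → ℝ)
    (f g : ℝ → ℝ) (Z : ZMod n → ℝ) (t₀ t₁ : ℝ) (k : ZMod n) (t : ℝ) : ℝ :=
  derivWithin (fun s => ansatz n vb χ f k s) (Set.Icc t₀ t₁) t -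
    (D * (n : ℝ) ^ 2 *
        (ansatz n vb χ f (k - 1) t - 2 * ansatz n vb χ f k t + ansatz n vb χ f (k + 1) t) +
      Z k * f (ansatz n vb χ f k t) - g (ansatz n vb χ f k t))

lemma AC_circleDist_le_abs (x y : ℝ) : circleDist 1 x y ≤ |x - y| := by
  unfold circleDist
  have h : ((x : AddCircle (1:ℝ)) - (y : AddCircle (1:ℝ))) = ((x - y : ℝ) : AddCircle (1:ℝ)) :=
    (AddCircle.coe_sub _ _ _).symm
  rw [h]
  exact (QuotientAddGroup.norm_mk_le_norm (m := x - y)).trans_eq (Real.norm_eq_abs _)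

lemma AC_abs_mul_le {a b A B : ℝ} (ha : |a| ≤ A) (hb : |b| ≤ B) : |a * b| ≤ A * B := by
  rw [abs_mul]
  exact mul_le_mul ha hb (abs_nonneg _) (le_trans (abs_nonneg _) ha)

lemma AC_lip_of_deriv_bound {u u' : ℝ → ℝ} (hu : ∀ x, HasDerivAt u (u' x) x) {B : ℝ}
    (hB : ∀ x, |u' x| ≤ B) (x y : ℝ) : |u x - u y| ≤ B * |x - y| := by
  have := Convex.norm_image_sub_le_of_norm_hasDerivWithin_le
    (f := u) (f' := u') (s := Set.univ)
    (fun z _ => (hu z).hasDerivWithinAt) (fun z _ => by simpa [Real.norm_eq_abs] using hB z)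
    convex_univ (Set.mem_univ y) (Set.mem_univ x)
  simpa [Real.norm_eq_abs] using this

lemma AC_secondDiff_le {u u' : ℝ → ℝ} (hu : ∀ x, HasDerivAt u (u' x) x) {L : ℝ}
    (hlip : ∀ x y, |u' x - u' y| ≤ L * |x - y|) (a : ℝ) {h : ℝ} (hh : 0 ≤ h) :
    |u (a - h) - 2 * u a + u (a + h)| ≤ L * h ^ 2 := by
  set φ : ℝ → ℝ := fun s => u (a + s) - u (a - h + s) with hφ
  have hder : ∀ s, HasDerivAt φ (u' (a + s) - u' (a - h + s)) s := by
    intro s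
    have h1 : HasDerivAt (fun s => u (a + s)) (u' (a + s)) s := by
      simpa [Function.comp_def] using (hu (a + s)).comp s ((hasDerivAt_id s).const_add a)
    have h2 : HasDerivAt (fun s => u (a - h + s)) (u' (a - h + s)) s := by
      simpa [Function.comp_def] using (hu (a - h + s)).comp s ((hasDerivAt_id s).const_add (a - h))
    exact h1.sub h2
  have hbd : ∀ s, |u' (a + s) - u' (a - h + s)| ≤ L * h := by
    intro s
    have := hlip (a + s) (a - h + s)
    have he : |a + s - (a - h + s)| = h := by
      rw [abs_of_nonneg] <;> [skip; linarith]; ring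
    rwa [he] at this
  have := AC_lip_of_deriv_bound hder hbd h 0
  have hφ0 : φ h - φ 0 = u (a - h) - 2 * u a + u (a + h) := by
    simp only [hφ]; ring_nf
  rw [hφ0] at this
  calc |u (a - h) - 2 * u a + u (a + h)| ≤ L * h * |h - 0| := this
    _ = L * h ^ 2 := by rw [abs_of_nonneg (by linarith : (0:ℝ) ≤ h - 0)]; ring

lemma AC_taylor2 {u d1 d2 : ℝ → ℝ} (h1 : ∀ x, HasDerivAt u (d1 x) x)
    (h2 : ∀ x, HasDerivAt d1 (d2 x) x) {M ρ : ℝ} (hM : 0 ≤ M) (hρ : 0 ≤ ρ)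
    (hHol : ∀ x y, |d2 x - d2 y| ≤ M * |x - y| ^ ρ) (a : ℝ) {h : ℝ} (hh : 0 ≤ h) :
    |u (a - h) - 2 * u a + u (a + h) - h ^ 2 * d2 a| ≤ M * h ^ ρ * h ^ 2 := by
  set S := d2 a with hS
  set η : ℝ → ℝ := fun x => d1 x - x * S with hη
  have hηlip : ∀ x ∈ Set.Icc (a-h) (a+h), ∀ y ∈ Set.Icc (a-h) (a+h),
      |η x - η y| ≤ M * h ^ ρ * |x - y| := by
    intro x hx y hy
    have hder : ∀ z ∈ Set.Icc (a-h) (a+h),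
        HasDerivWithinAt η (d2 z - S) (Set.Icc (a-h) (a+h)) z := by
      intro z _
      have := ((h2 z).sub ((hasDerivAt_id z).mul_const S)).hasDerivWithinAt
        (s := Set.Icc (a-h) (a+h))
      simpa [hη, Pi.sub_def] using this
    have hbd : ∀ z ∈ Set.Icc (a-h) (a+h), ‖d2 z - S‖ ≤ M * h ^ ρ := by
      intro z hz
      have h0 : |z - a| ≤ h := by
        rw [abs_le]; constructor <;> [linarith [hz.1]; linarith [hz.2]]
      have := hHol z a
      have hm : M * |z - a| ^ ρ ≤ M * h ^ ρ := by
        exact mul_le_mul_of_nonneg_left (Real.rpow_le_rpow (abs_nonneg _) h0 hρ) hM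
      rw [Real.norm_eq_abs]
      exact le_trans this hm
    have := Convex.norm_image_sub_le_of_norm_hasDerivWithin_le hder hbd
      (convex_Icc _ _) hy hx
    simpa [Real.norm_eq_abs] using this
  set φ : ℝ → ℝ := fun s => u (a + s) - u (a - h + s) - s * h * S with hφ
  have hφder : ∀ s, HasDerivAt φ (η (a + s) - η (a - h + s)) s := by
    intro s
    have ha1 : HasDerivAt (fun s => u (a + s)) (d1 (a + s)) s := by
      simpa [Function.comp_def] using (h1 (a + s)).comp s ((hasDerivAt_id s).const_add a)
    have ha2 : HasDerivAt (fun s => u (a - h + s)) (d1 (a - h + s)) s := by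
      simpa [Function.comp_def] using (h1 (a - h + s)).comp s ((hasDerivAt_id s).const_add (a - h))
    have ha3 : HasDerivAt (fun s : ℝ => s * h * S) (h * S) s := by
      have := (hasDerivAt_id s).mul_const (h * S)
      simp only [one_mul, id] at this
      rw [show (fun s : ℝ => s * h * S) = fun y => y * (h * S) by funext y; ring]
      exact this
    have := (ha1.sub ha2).sub ha3
    have e : η (a + s) - η (a - h + s) = d1 (a + s) - d1 (a - h + s) - h * S := by
      simp only [hη]; ring
    rw [e]; exact this
  have hbd2 : ∀ s ∈ Set.Icc (0:ℝ) h, ‖η (a + s) - η (a - h + s)‖ ≤ M * h ^ ρ * h := by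
    intro s hs
    have m1 : a + s ∈ Set.Icc (a-h) (a+h) := by
      constructor <;> [linarith [hs.1]; linarith [hs.2]]
    have m2 : a - h + s ∈ Set.Icc (a-h) (a+h) := by
      constructor <;> [linarith [hs.1]; linarith [hs.2]]
    have := hηlip _ m1 _ m2
    have he : |a + s - (a - h + s)| = h := by
      rw [show a + s - (a - h + s) = h by ring, abs_of_nonneg hh]
    rw [he] at this
    simpa [Real.norm_eq_abs] using this
  have hmain := Convex.norm_image_sub_le_of_norm_hasDerivWithin_le
    (f := φ) (f' := fun s => η (a + s) - η (a - h + s)) (s := Set.Icc (0:ℝ) h)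
    (fun s _ => (hφder s).hasDerivWithinAt) hbd2 (convex_Icc _ _)
    (Set.left_mem_Icc.mpr hh) (Set.right_mem_Icc.mpr hh)
  have hval : φ h - φ 0 = u (a - h) - 2 * u a + u (a + h) - h ^ 2 * S := by
    simp only [hφ]; ring_nf
  rw [Real.norm_eq_abs, Real.norm_eq_abs, hval, sub_zero, abs_of_nonneg hh] at hmain
  calc |u (a - h) - 2 * u a + u (a + h) - h ^ 2 * S| ≤ M * h ^ ρ * h * h := hmain
    _ = M * h ^ ρ * h ^ 2 := by ring

lemma AC_lattice_shift {n : ℕ} [NeZero n] (j k : ZMod n) (c : ℤ)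
    (hjk : j = k + (c : ZMod n)) :
    ∃ m : ℤ, (ZMod.val j : ℝ) = (ZMod.val k : ℝ) + c + n * m := by
  have h1 : ((ZMod.val j : ℤ) : ZMod n) = ((ZMod.val k + c : ℤ) : ZMod n) := by
    push_cast
    rw [ZMod.natCast_val, ZMod.natCast_val, ZMod.cast_id, ZMod.cast_id, hjk]
  have h2 := (ZMod.intCast_eq_intCast_iff _ _ _).mp h1
  obtain ⟨m, hm⟩ := h2.dvd
  refine ⟨-m, ?_⟩
  have : (ZMod.val j : ℤ) = (ZMod.val k : ℤ) + c + n * (-m) := by linarith [hm]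
  exact_mod_cast congrArg (fun z : ℤ => (z : ℝ)) this

lemma AC_periodic_int {f : ℝ → ℝ} (hf : Function.Periodic f 1) (x : ℝ) (m : ℤ) :
    f (x + m) = f x := by
  have := hf.sub_int_mul_eq (x := x) (-m)
  simpa using this

lemma AC_contdiff2 {u : ℝ → ℝ} (hu : ContDiff ℝ 2 u) :
    (∀ x, HasDerivAt u (deriv u x) x) ∧ (∀ x, HasDerivAt (deriv u) (deriv (deriv u) x) x) := by
  have h1 : Differentiable ℝ u := hu.differentiable (by norm_num)
  have h2 : ContDiff ℝ 1 (deriv u) := by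
    have := (contDiff_succ_iff_deriv (n := 1)).mp (by exact_mod_cast hu)
    exact this.2.2
  have h3 : Differentiable ℝ (deriv u) := h2.differentiable one_ne_zero
  exact ⟨fun x => (h1 x).hasDerivAt, fun x => (h3 x).hasDerivAt⟩

lemma AC_abs_add5 (x1 x2 x3 x4 x5 : ℝ) :
    |x1+x2+x3+x4+x5| ≤ |x1|+|x2|+|x3|+|x4|+|x5| := by
  have h1 := abs_add_le (x1+x2+x3+x4) x5
  have h2 := abs_add_le (x1+x2+x3) x4
  have h3 := abs_add_le (x1+x2) x3
  have h4 := abs_add_le x1 x2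
  linarith

set_option maxHeartbeats 2000000 in
/-- Consistency of the approximate ansatz: there is a constant `C`, depending only on
`D, K₀, …, K₄`, such that `sup_{t∈[t₀,t₁]} max_k |res^{(k)}(t)| ≤ C (h^p ∨ h^{ρ−p})`. -/
theorem ansatz_consistency (D K₀ K₁ K₂ K₃ K₄ : ℝ) (hD : 0 < D) (hK₀ : 0 < K₀)
    (hK₁ : 0 < K₁) (hK₂ : 0 < K₂) (hK₃ : 0 < K₃) (hK₄ : 0 < K₄) :
    ∃ C : ℝ, 0 < C ∧
    ∀ (n : ℕ), 2 ≤ n → ∀ p ρ : ℝ, p ∈ Set.Ico (0:ℝ) 1 → ρ ∈ Set.Ioo p 1 →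
    ∀ t₀ t₁ : ℝ, 0 ≤ t₀ → t₀ < t₁ →
    ∀ f : ℝ → ℝ,
      (∀ x y, |f x - f y| ≤ K₀ * |x - y|) → |f 0| ≤ K₀ → Differentiable ℝ f →
      (∀ x, |deriv f x| ≤ K₀) → (∀ x y, |deriv f x - deriv f y| ≤ K₀ * |x - y|) →
    ∀ g : ℝ → ℝ,
      (∀ x y, |g x - g y| ≤ K₀ * |x - y|) → |g 0| ≤ K₀ → Differentiable ℝ g →
      (∀ x, |deriv g x| ≤ K₀) → (∀ x y, |deriv g x - deriv g y| ≤ K₀ * |x - y|) →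
    ∀ vb vbt zb : ℝ → ℝ → ℝ,
      (∀ t, Function.Periodic (vb t) 1) →
      (∀ t ∈ Set.Icc t₀ t₁, ContDiff ℝ 2 (vb t)) →
      (∀ x, ∀ t ∈ Set.Icc t₀ t₁,
          HasDerivWithinAt (fun s => vb s x) (vbt t x) (Set.Icc t₀ t₁) t) →
      (∀ x, ContinuousOn (fun t => vbt t x) (Set.Icc t₀ t₁)) →
      (∀ t ∈ Set.Icc t₀ t₁, ∀ x, |vb t x| ≤ K₁) →
      (∀ t ∈ Set.Icc t₀ t₁, ∀ x, |deriv (vb t) x| ≤ K₁) →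
      (∀ t ∈ Set.Icc t₀ t₁, ∀ x, |deriv (deriv (vb t)) x| ≤ K₂ * ((n : ℝ)⁻¹) ^ (-p)) →
      (∀ t ∈ Set.Icc t₀ t₁, ∀ x, |vbt t x| ≤ K₂ * ((n : ℝ)⁻¹) ^ (-p)) →
      (∀ t ∈ Set.Icc t₀ t₁, ∀ x₁ x₂ : ℝ,
          |deriv (deriv (vb t)) x₁ - deriv (deriv (vb t)) x₂| ≤
            K₃ * ((n : ℝ)⁻¹) ^ (-p) * circleDist 1 x₁ x₂ ^ ρ) →
      (∀ t ∈ Set.Icc t₀ t₁, ∀ x, zb t x ∈ Set.Icc (0:ℝ) 1) →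
      (∀ t ∈ Set.Icc t₀ t₁, ∀ x,
          vbt t x = D * deriv (deriv (vb t)) x + zb t x * f (vb t x) - g (vb t x)) →
    ∀ Z χ : ZMod n → ℝ,
      (∀ k, Z k = 0 ∨ Z k = 1) →
      (∀ t ∈ Set.Icc t₀ t₁, ∀ k : ZMod n,
          D * (χ (k + 1) - 2 * χ k + χ (k - 1)) =
            zb t ((n : ℝ)⁻¹ * (ZMod.val k)) - Z k) →
      (∀ k : ZMod n, |χ k| ≤ K₄ * ((n : ℝ)⁻¹) ^ (2 * p - 2)) →
      (∀ k : ZMod n, |χ (k + 1) - χ k| ≤ K₄ * ((n : ℝ)⁻¹) ^ (p - 1)) →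
    ∀ t ∈ Set.Icc t₀ t₁, ∀ k : ZMod n,
      |ansatzResidual D n vb χ f g Z t₀ t₁ k t| ≤
        C * max (((n : ℝ)⁻¹) ^ p) (((n : ℝ)⁻¹) ^ (ρ - p)) := by

  refine ⟨K₀*K₂*K₄ + D*K₃ + D*K₀*K₄*(K₂+K₁^2) + 2*D*K₀*K₁*K₄ + 2*K₀^2*K₄*(1+K₁),
    by positivity, ?_⟩
  intro n hn2 p ρ hpI hρI t₀ t₁ ht₀ ht01 f hfLip hf0 hfDiff hfD hfDLip
    g hgLip hg0 hgDiff hgD hgDLip vb vbt zb hper hC2 hvbtD hvbtC hvbB hvxB hvxxB hvbtB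
    hHolC hzb hPDE Z χ hZ hχeq hχB hχdB t ht k
  haveI : NeZero n := ⟨by omega⟩
  have hn0 : (0:ℝ) < n := by positivity
  set H := (n:ℝ)⁻¹ with hHdef
  have hH0 : 0 < H := by positivity
  have hH1 : H ≤ 1 := by
    rw [hHdef]
    rw [inv_le_one_iff₀]
    right; exact_mod_cast Nat.one_le_of_lt hn2
  have hHn : H * n = 1 := by
    rw [hHdef]; field_simp
  have hn2H2 : (n:ℝ)^2 * H^2 = 1 := by
    rw [hHdef]; field_simp
  set a := H * (ZMod.val k : ℝ) with hadef
  -- lattice shifts and periodicity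
  obtain ⟨mP, hmP⟩ := AC_lattice_shift (k+1) k 1 (by push_cast; ring)
  obtain ⟨mM, hmM⟩ := AC_lattice_shift (k-1) k (-1) (by push_cast; ring)
  have hxP : H * (ZMod.val (k+1) : ℝ) = (a + H) + mP := by
    rw [hmP]; push_cast; linear_combination (mP:ℝ) * hHn - hadef
  have hxM : H * (ZMod.val (k-1) : ℝ) = (a - H) + mM := by
    rw [hmM]; push_cast; linear_combination (mM:ℝ) * hHn - hadef
  have EvP : vb t (H * (ZMod.val (k+1) : ℝ)) = vb t (a + H) := by
    rw [hxP]; exact AC_periodic_int (hper t) _ mP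
  have EvM : vb t (H * (ZMod.val (k-1) : ℝ)) = vb t (a - H) := by
    rw [hxM]; exact AC_periodic_int (hper t) _ mM
  -- ansatz rewrites
  have haK : ansatz n vb χ f k t = vb t a + H^2 * χ k * f (vb t a) := by
    simp only [ansatz, ← hHdef, ← hadef]
  have haP : ansatz n vb χ f (k+1) t = vb t (a+H) + H^2 * χ (k+1) * f (vb t (a+H)) := by
    simp only [ansatz, ← hHdef]; rw [EvP]
  have haM : ansatz n vb χ f (k-1) t = vb t (a-H) + H^2 * χ (k-1) * f (vb t (a-H)) := by
    simp only [ansatz, ← hHdef]; rw [EvM]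
  -- time derivative
  have hv : HasDerivWithinAt (fun s => vb s a) (vbt t a) (Set.Icc t₀ t₁) t := hvbtD a t ht
  have hcomp : HasDerivWithinAt (fun s => f (vb s a)) (deriv f (vb t a) * vbt t a)
      (Set.Icc t₀ t₁) t :=
    ((hfDiff (vb t a)).hasDerivAt).comp_hasDerivWithinAt t hv
  have hDW : derivWithin (fun s => ansatz n vb χ f k s) (Set.Icc t₀ t₁) t =
      vbt t a + H^2 * χ k * (deriv f (vb t a) * vbt t a) := by
    have hder := hv.add (hcomp.const_mul (H^2 * χ k))
    have hfun : (fun s => ansatz n vb χ f k s) =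
        fun s => vb s a + H^2 * χ k * f (vb s a) := by
      funext s; simp only [ansatz, ← hHdef, ← hadef]
    rw [hfun]
    exact hder.derivWithin (uniqueDiffOn_Icc ht01 t ht)
  -- abbreviations
  set A := vb t a with hA
  set Ap := vb t (a+H) with hAp
  set Am := vb t (a-H) with hAm
  set S := deriv (deriv (vb t)) a with hSdef
  set W := vbt t a with hW
  set F0 := f A with hF0
  set Fp := f Ap with hFp
  set Fm := f Am with hFm
  set c0 := χ k with hc0
  set cP := χ (k+1) with hcP
  set cM := χ (k-1) with hcM
  set ζ := Z k with hζ
  set z := zb t a with hz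
  have hPDE' : W = D * S + z * F0 - g A := hPDE t ht a
  have hχ' : D * (cP - 2*c0 + cM) = z - ζ := hχeq t ht k
  have hresEq : ansatzResidual D n vb χ f g Z t₀ t₁ k t =
      (W + H^2*c0*(deriv f A * W)) -
        (D*(n:ℝ)^2*((Am + H^2*cM*Fm) - 2*(A + H^2*c0*F0) + (Ap + H^2*cP*Fp)) +
          ζ * f (A + H^2*c0*F0) - g (A + H^2*c0*F0)) := by
    unfold ansatzResidual
    rw [hDW, haP, haM, haK]
  have hkey : ansatzResidual D n vb χ f g Z t₀ t₁ k t =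
      (H^2*c0*(deriv f A * W))
      + (D * (S - (n:ℝ)^2 * (Am - 2*A + Ap)))
      + (-(D * c0 * (Fm - 2*F0 + Fp)))
      + (-(D * ((cP - c0)*(Fp - F0) + (cM - c0)*(Fm - F0))))
      + (ζ*(F0 - f (A + H^2*c0*F0)) + (g (A + H^2*c0*F0) - g A)) := by
    rw [hresEq]
    linear_combination hPDE' - F0 * hχ' - D*(cM*Fm - 2*c0*F0 + cP*Fp) * hn2H2
  -- basic exponent facts
  have hp0 : 0 ≤ p := hpI.1
  have hρ0 : 0 ≤ ρ := le_trans hp0 (le_of_lt hρI.1)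
  have epow : ∀ s r : ℝ, H ^ s * H ^ r = H ^ (s + r) := fun s r => (Real.rpow_add hH0 s r).symm
  have hpow2 : (H^2 : ℝ) = H ^ ((2:ℝ)) := by
    rw [← Real.rpow_natCast H 2]; norm_num
  have hH2p_le : H ^ (2*p) ≤ H ^ p := Real.rpow_le_rpow_of_exponent_ge hH0 hH1 (by linarith)
  have hH2abs : |(H^2 : ℝ)| ≤ H^2 := le_of_eq (abs_of_nonneg (by positivity))
  -- smoothness facts
  obtain ⟨hud, hdd⟩ := AC_contdiff2 (hC2 t ht)
  have hvLip : ∀ x y, |vb t x - vb t y| ≤ K₁ * |x - y| :=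
    AC_lip_of_deriv_bound hud (hvxB t ht)
  have hvxLip : ∀ x y, |deriv (vb t) x - deriv (vb t) y| ≤ (K₂*H^(-p)) * |x - y| :=
    AC_lip_of_deriv_bound hdd (hvxxB t ht)
  -- T1
  have hb1 : |H^2*c0*(deriv f A * W)| ≤ K₀*K₂*K₄ * H^p := by
    have h1 : |H^2*c0| ≤ H^2 * (K₄ * H^(2*p-2)) := AC_abs_mul_le hH2abs (hχB k)
    have h2 : |deriv f A * W| ≤ K₀ * (K₂ * H^(-p)) := AC_abs_mul_le (hfD A) (hvbtB t ht a)
    calc |H^2*c0*(deriv f A * W)| ≤ (H^2*(K₄*H^(2*p-2))) * (K₀*(K₂*H^(-p))) :=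
          AC_abs_mul_le h1 h2
      _ = K₀*K₂*K₄ * (H^(2:ℝ) * H^(2*p-2) * H^(-p)) := by rw [hpow2]; ring
      _ = K₀*K₂*K₄ * H^p := by rw [epow, epow]; congr 1; congr 1; ring
  -- T2
  have hHol' : ∀ x y, |deriv (deriv (vb t)) x - deriv (deriv (vb t)) y| ≤
      (K₃*H^(-p)) * |x - y| ^ ρ := by
    intro x y
    refine le_trans (hHolC t ht x y) ?_
    have hcd : circleDist 1 x y ^ ρ ≤ |x - y| ^ ρ :=
      Real.rpow_le_rpow (norm_nonneg _) (AC_circleDist_le_abs x y) hρ0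
    calc K₃ * H^(-p) * circleDist 1 x y ^ ρ ≤ K₃ * H^(-p) * |x - y| ^ ρ := by
          exact mul_le_mul_of_nonneg_left hcd (by positivity)
      _ = (K₃*H^(-p)) * |x - y| ^ ρ := by ring
  have htay : |Am - 2*A + Ap - H^2*S| ≤ (K₃*H^(-p))*H^ρ*H^2 :=
    AC_taylor2 hud hdd (by positivity) hρ0 hHol' a hH0.le
  have hb2 : |D * (S - (n:ℝ)^2 * (Am - 2*A + Ap))| ≤ D*K₃ * H^(ρ-p) := by
    have hT2eq : D * (S - (n:ℝ)^2*(Am - 2*A + Ap)) =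
        D*(n:ℝ)^2 * (H^2*S - (Am - 2*A + Ap)) := by
      linear_combination (-(D*S)) * hn2H2
    have habs : |H^2*S - (Am - 2*A + Ap)| ≤ (K₃*H^(-p))*H^ρ*H^2 := by
      rw [abs_sub_comm]
      exact htay
    calc |D * (S - (n:ℝ)^2 * (Am - 2*A + Ap))|
        = |D*(n:ℝ)^2| * |H^2*S - (Am - 2*A + Ap)| := by rw [hT2eq, abs_mul]
      _ ≤ (D*(n:ℝ)^2) * ((K₃*H^(-p))*H^ρ*H^2) := by
          rw [abs_of_nonneg (by positivity)]
          exact mul_le_mul_of_nonneg_left habs (by positivity)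
      _ = D*K₃*((n:ℝ)^2*H^2*(H^(-p)*H^ρ)) := by ring
      _ = D*K₃*(H^(-p)*H^ρ) := by rw [hn2H2]; ring
      _ = D*K₃ * H^(ρ-p) := by rw [epow]; congr 1; congr 1; ring
  -- T3
  have hFd : ∀ x, HasDerivAt (fun x => f (vb t x)) (deriv f (vb t x) * deriv (vb t) x) x :=
    fun x => ((hfDiff _).hasDerivAt).comp x (hud x)
  have hDFLip : ∀ x y, |deriv f (vb t x) * deriv (vb t) x - deriv f (vb t y) * deriv (vb t) y|
      ≤ (K₀*(K₂*H^(-p)) + K₀*K₁*K₁) * |x - y| := by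
    intro x y
    have hsplit : deriv f (vb t x) * deriv (vb t) x - deriv f (vb t y) * deriv (vb t) y =
        deriv f (vb t x)*(deriv (vb t) x - deriv (vb t) y) +
          (deriv f (vb t x) - deriv f (vb t y))*(deriv (vb t) y) := by ring
    have hone : |deriv f (vb t x)*(deriv (vb t) x - deriv (vb t) y)| ≤
        K₀*((K₂*H^(-p))*|x-y|) := AC_abs_mul_le (hfD _) (hvxLip x y)
    have htwo : |(deriv f (vb t x) - deriv f (vb t y))*(deriv (vb t) y)| ≤
        (K₀*(K₁*|x-y|))*K₁ :=
      AC_abs_mul_le (le_trans (hfDLip _ _)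
        (mul_le_mul_of_nonneg_left (hvLip x y) hK₀.le)) (hvxB t ht y)
    calc |deriv f (vb t x) * deriv (vb t) x - deriv f (vb t y) * deriv (vb t) y|
        ≤ K₀*((K₂*H^(-p))*|x-y|) + (K₀*(K₁*|x-y|))*K₁ := by
          rw [hsplit]; exact le_trans (abs_add_le _ _) (add_le_add hone htwo)
      _ = (K₀*(K₂*H^(-p)) + K₀*K₁*K₁) * |x - y| := by ring
  have hsd : |Fm - 2*F0 + Fp| ≤ (K₀*(K₂*H^(-p)) + K₀*K₁*K₁)*H^2 :=
    AC_secondDiff_le hFd hDFLip a hH0.le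
  have hb3 : |(-(D * c0 * (Fm - 2*F0 + Fp)))| ≤ D*K₀*K₄*(K₂+K₁^2) * H^p := by
    have e3a : H^(2*p-2) * (H^(-p) * H^(2:ℝ)) = H^p := by
      rw [epow, epow]; congr 1; ring
    have e3b : H^(2*p-2) * H^(2:ℝ) = H^(2*p) := by
      rw [epow]; congr 1; ring
    calc |(-(D * c0 * (Fm - 2*F0 + Fp)))| = D * |c0 * (Fm - 2*F0 + Fp)| := by
          rw [abs_neg, mul_assoc, abs_mul, abs_of_nonneg hD.le]
      _ ≤ D * ((K₄*H^(2*p-2)) * ((K₀*(K₂*H^(-p)) + K₀*K₁*K₁)*H^2)) :=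
          mul_le_mul_of_nonneg_left (AC_abs_mul_le (hχB k) hsd) hD.le
      _ = D*K₀*K₄*(K₂*(H^(2*p-2)*(H^(-p)*H^(2:ℝ))) + K₁^2*(H^(2*p-2)*H^(2:ℝ))) := by
          rw [hpow2]; ring
      _ = D*K₀*K₄*(K₂*H^p + K₁^2*H^(2*p)) := by rw [e3a, e3b]
      _ ≤ D*K₀*K₄*((K₂+K₁^2) * H^p) := by
          refine mul_le_mul_of_nonneg_left ?_ (by positivity)
          have h5 : K₁^2*H^(2*p) ≤ K₁^2*H^p :=
            mul_le_mul_of_nonneg_left hH2p_le (by positivity)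
          have h6 : (K₂+K₁^2) * H^p = K₂*H^p + K₁^2*H^p := by ring
          linarith
      _ = D*K₀*K₄*(K₂+K₁^2) * H^p := by ring
  -- T4
  have hHa : |a + H - a| = H := by rw [show a + H - a = H by ring, abs_of_nonneg hH0.le]
  have hHm : |a - H - a| = H := by
    rw [show a - H - a = -H by ring, abs_neg, abs_of_nonneg hH0.le]
  have hFpd : |Fp - F0| ≤ K₀*(K₁*H) := by
    have h2 : |Ap - A| ≤ K₁*H := by have := hvLip (a+H) a; rwa [hHa] at this
    exact le_trans (hfLip Ap A) (mul_le_mul_of_nonneg_left h2 hK₀.le)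
  have hFmd : |Fm - F0| ≤ K₀*(K₁*H) := by
    have h2 : |Am - A| ≤ K₁*H := by have := hvLip (a-H) a; rwa [hHm] at this
    exact le_trans (hfLip Am A) (mul_le_mul_of_nonneg_left h2 hK₀.le)
  have hcPd : |cP - c0| ≤ K₄*H^(p-1) := hχdB k
  have hcMd : |cM - c0| ≤ K₄*H^(p-1) := by
    have := hχdB (k-1)
    rw [sub_add_cancel] at this
    rw [abs_sub_comm]
    exact this
  have eT4 : H^(p-1) * H = H^p := by
    have h := (Real.rpow_add hH0 (p-1) 1).symm
    rw [Real.rpow_one] at h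
    rw [h]; congr 1; ring
  have hb4 : |(-(D * ((cP - c0)*(Fp - F0) + (cM - c0)*(Fm - F0))))| ≤
      2*D*K₀*K₁*K₄ * H^p := by
    have h1 : |(cP - c0)*(Fp - F0)| ≤ (K₄*H^(p-1))*(K₀*(K₁*H)) := AC_abs_mul_le hcPd hFpd
    have h2 : |(cM - c0)*(Fm - F0)| ≤ (K₄*H^(p-1))*(K₀*(K₁*H)) := AC_abs_mul_le hcMd hFmd
    calc |(-(D * ((cP - c0)*(Fp - F0) + (cM - c0)*(Fm - F0))))|
        = D * |(cP - c0)*(Fp - F0) + (cM - c0)*(Fm - F0)| := by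
          rw [abs_neg, abs_mul, abs_of_nonneg hD.le]
      _ ≤ D * ((K₄*H^(p-1))*(K₀*(K₁*H)) + (K₄*H^(p-1))*(K₀*(K₁*H))) :=
          mul_le_mul_of_nonneg_left (le_trans (abs_add_le _ _) (add_le_add h1 h2)) hD.le
      _ = 2*D*K₀*K₁*K₄ * (H^(p-1) * H) := by ring
      _ = 2*D*K₀*K₁*K₄ * H^p := by rw [eT4]
  -- T5
  have hζb : |ζ| ≤ 1 := by
    rcases hZ k with h | h <;> rw [hζ, h] <;> norm_num
  have hF0b : |F0| ≤ K₀*(1+K₁) := by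
    have h1 : |F0 - f 0| ≤ K₀ * |A - 0| := hfLip A 0
    have h2 : |A| ≤ K₁ := hvbB t ht a
    have h3 : |F0| ≤ |F0 - f 0| + |f 0| := by
      have := abs_add_le (F0 - f 0) (f 0); simpa using this
    rw [sub_zero] at h1
    calc |F0| ≤ |F0 - f 0| + |f 0| := h3
      _ ≤ K₀ * K₁ + K₀ := add_le_add (le_trans h1 (mul_le_mul_of_nonneg_left h2 hK₀.le)) hf0
      _ = K₀*(1+K₁) := by ring
  have hVA : |(A + H^2*c0*F0) - A| ≤ H^2*(K₄*H^(2*p-2))*(K₀*(1+K₁)) := by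
    rw [add_sub_cancel_left]
    exact AC_abs_mul_le (AC_abs_mul_le hH2abs (hχB k)) hF0b
  have e5 : H^2*H^(2*p-2) = H^(2*p) := by
    rw [hpow2, epow]; congr 1; ring
  have hb5 : |ζ*(F0 - f (A + H^2*c0*F0)) + (g (A + H^2*c0*F0) - g A)| ≤
      2*K₀^2*K₄*(1+K₁) * H^p := by
    have h1 : |F0 - f (A + H^2*c0*F0)| ≤ K₀ * (H^2*(K₄*H^(2*p-2))*(K₀*(1+K₁))) := by
      have := hfLip A (A + H^2*c0*F0)
      refine le_trans this (mul_le_mul_of_nonneg_left ?_ hK₀.le)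
      rw [abs_sub_comm]
      exact hVA
    have h2 : |g (A + H^2*c0*F0) - g A| ≤ K₀ * (H^2*(K₄*H^(2*p-2))*(K₀*(1+K₁))) :=
      le_trans (hgLip _ _) (mul_le_mul_of_nonneg_left hVA hK₀.le)
    have h3 : |ζ*(F0 - f (A + H^2*c0*F0))| ≤ 1 * (K₀ * (H^2*(K₄*H^(2*p-2))*(K₀*(1+K₁)))) :=
      AC_abs_mul_le hζb h1
    calc |ζ*(F0 - f (A + H^2*c0*F0)) + (g (A + H^2*c0*F0) - g A)|
        ≤ 1 * (K₀ * (H^2*(K₄*H^(2*p-2))*(K₀*(1+K₁)))) +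
            K₀ * (H^2*(K₄*H^(2*p-2))*(K₀*(1+K₁))) :=
          le_trans (abs_add_le _ _) (add_le_add h3 h2)
      _ = 2*K₀^2*K₄*(1+K₁) * (H^2*H^(2*p-2)) := by ring
      _ = 2*K₀^2*K₄*(1+K₁) * H^(2*p) := by rw [e5]
      _ ≤ 2*K₀^2*K₄*(1+K₁) * H^p := by
          exact mul_le_mul_of_nonneg_left hH2p_le (by positivity)
  -- combine
  have hpMx : H^p ≤ max (H^p) (H^(ρ-p)) := le_max_left _ _
  have hρMx : H^(ρ-p) ≤ max (H^p) (H^(ρ-p)) := le_max_right _ _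
  rw [hkey]
  refine le_trans (AC_abs_add5 _ _ _ _ _) ?_
  have hsum := add_le_add (add_le_add (add_le_add (add_le_add hb1 hb2) hb3) hb4) hb5
  refine le_trans hsum ?_
  have c1 : (0:ℝ) ≤ K₀*K₂*K₄ := by positivity
  have c2 : (0:ℝ) ≤ D*K₃ := by positivity
  have c3 : (0:ℝ) ≤ D*K₀*K₄*(K₂+K₁^2) := by positivity
  have c4 : (0:ℝ) ≤ 2*D*K₀*K₁*K₄ := by positivity
  have c5 : (0:ℝ) ≤ 2*K₀^2*K₄*(1+K₁) := by positivity
  calc K₀*K₂*K₄ * H^p + D*K₃ * H^(ρ-p) + D*K₀*K₄*(K₂+K₁^2) * H^p + 2*D*K₀*K₁*K₄ * H^p +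
        2*K₀^2*K₄*(1+K₁) * H^p
      ≤ K₀*K₂*K₄ * max (H^p) (H^(ρ-p)) + D*K₃ * max (H^p) (H^(ρ-p)) +
          D*K₀*K₄*(K₂+K₁^2) * max (H^p) (H^(ρ-p)) + 2*D*K₀*K₁*K₄ * max (H^p) (H^(ρ-p)) +
          2*K₀^2*K₄*(1+K₁) * max (H^p) (H^(ρ-p)) := by
        apply add_le_add
        apply add_le_add
        apply add_le_add
        apply add_le_add
        · exact mul_le_mul_of_nonneg_left hpMx c1
        · exact mul_le_mul_of_nonneg_left hρMx c2
        · exact mul_le_mul_of_nonneg_left hpMx c3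
        · exact mul_le_mul_of_nonneg_left hpMx c4
        · exact mul_le_mul_of_nonneg_left hpMx c5
    _ = (K₀*K₂*K₄ + D*K₃ + D*K₀*K₄*(K₂+K₁^2) + 2*D*K₀*K₁*K₄ + 2*K₀^2*K₄*(1+K₁)) *
          max (H^p) (H^(ρ-p)) := by ring
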